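/- Let 0<a<1, c_u∈ℝ, σ_e²>0, and R_u(τ)=c_u²σ_e²·a^{|τ|}·[2/(1−a²)³+(|τ|−1)/(1−a²)²] for τ∈ℤ (the autocovariance of the filter H(q)=c_u/(1−aq⁻¹)² driven by white noise of variance σ_e²). Then for every integer m≥0, the bilateral sum Σ_{τ=−∞}^{∞} R_u(τ)R_u(τ+m) = (c_u⁴σ_e⁴/(1−a²)⁶)·f_Γ(m), where f_Γ(x) = [2a^{x+2}/(1−a²)]·[(1−x)a⁴+(5−x)a²+4+2x] − a^x(1−a²)²·x(x+1)(2x+1)/6 + a^x(1−a²)²·x²(x+1)/2 + a^x(x+1)·[(1−x)a⁴+2a²+1+x]. -/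

import Mathlib

/-!
Write `R_u(τ) = a^{|τ|} (α + β|τ|)`. Since `R_u` is even, the terms with `τ ≤ -m-1` repeat
those with `τ ≥ 1`, so the bilateral sum is twice the one-sided sum `∑_{n ≥ 0} R_u(n) R_u(n+m)`,
minus its `n = 0` term, plus the `m` terms with `-m ≤ τ ≤ -1`. The one-sided sum is
`a^m ∑ (quadratic in n) (a²)^n`, a combination of `∑ nᵏ qⁿ` for `k ≤ 2`; in the middle terms
`a^{|τ|} a^{|τ+m|} = a^m`, leaving a finite polynomial sum.
-/

/-- The closed-form autocovariance
`R_u(τ) = c_u²σ_e² a^{|τ|} [2/(1−a²)³ + (|τ|−1)/(1−a²)²]`. -/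
noncomputable def RuClosed (a cu σe2 : ℝ) (τ : ℤ) : ℝ :=
  cu ^ 2 * σe2 * a ^ τ.natAbs *
    (2 / (1 - a ^ 2) ^ 3 + ((τ.natAbs : ℝ) - 1) / (1 - a ^ 2) ^ 2)

/-- The function `f_Γ` of (73). -/
noncomputable def fGamma (a : ℝ) (x : ℕ) : ℝ :=
  2 * a ^ (x + 2) / (1 - a ^ 2) *
      ((1 - (x : ℝ)) * a ^ 4 + (5 - (x : ℝ)) * a ^ 2 + 4 + 2 * (x : ℝ)) -
    a ^ x * (1 - a ^ 2) ^ 2 * ((x : ℝ) * ((x : ℝ) + 1) * (2 * (x : ℝ) + 1) / 6) +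
    a ^ x * (1 - a ^ 2) ^ 2 * ((x : ℝ) ^ 2 * ((x : ℝ) + 1) / 2) +
    a ^ x * ((x : ℝ) + 1) * ((1 - (x : ℝ)) * a ^ 4 + 2 * a ^ 2 + 1 + (x : ℝ))

open Finset

theorem hasSum_sq_mul_geometric_of_norm_lt_one {𝕜 : Type*} [NormedField 𝕜] {r : 𝕜}
    (hr : ‖r‖ < 1) :
    HasSum (fun n : ℕ ↦ (n : 𝕜) ^ 2 * r ^ n) (r * (1 + r) / (1 - r) ^ 3) := by
  have hr1 : 1 - r ≠ 0 := by
    intro h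
    rw [sub_eq_zero] at h
    simp [← h] at hr
  have hchoose (n : ℕ) : ((n + 2).choose 2 : 𝕜) * 2 = (n + 2) * (n + 1) := by
    have h : (n + 2).choose 2 * 2 = (n + 2) * (n + 1) := by
      simpa using (Nat.add_one_mul_choose_eq (n + 1) 1).symm
    simpa using congrArg (Nat.cast (R := 𝕜)) h
  have h := ((hasSum_choose_mul_geometric_of_norm_lt_one 2 hr).mul_left 2).sub
    (((hasSum_coe_mul_geometric_of_norm_lt_one hr).mul_left 3).add
      ((hasSum_geometric_of_norm_lt_one hr).mul_left 2))
  convert! h using 1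
  · ext n
    linear_combination r ^ n * (hchoose n).symm
  · field_simp
    ring

theorem sum_range_add_one_mul_sub {K : Type*} [Field K] [CharZero K] (m : ℕ) :
    ∑ i ∈ range m, ((i : K) + 1) * (m - 1 - i) = (m ^ 3 - m) / 6 := by
  have hgauss (m : ℕ) : ∑ i ∈ range m, ((i : K) + 1) = m * (m + 1) / 2 := by
    induction m with
    | zero => simp
    | succ k ih => rw [sum_range_succ, ih]; push_cast; ring
  induction m with
  | zero => simp
  | succ m ih =>
    have hsplit (i : ℕ) :
        ((i : K) + 1) * ((m + 1 : ℕ) - 1 - i) = (i + 1) * (m - 1 - i) + (i + 1) := by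
      push_cast; ring
    rw [sum_range_succ, sum_congr rfl fun i _ ↦ hsplit i, sum_add_distrib, ih, hgauss]
    push_cast
    ring

section IntSplit

variable {R : Type*} [CommRing R] [TopologicalSpace R] [IsTopologicalAddGroup R]

theorem hasSum_int_natAbs_mul_natAbs_add (f : ℕ → R) (m : ℕ) {P : R}
    (hP : HasSum (fun n : ℕ ↦ f n * f (n + m)) P) :
    HasSum (fun τ : ℤ ↦ f τ.natAbs * f (τ + m).natAbs)
      (P + (P - f 0 * f m + ∑ i ∈ range m, f (i + 1) * f (m - 1 - i))) := by
  refine HasSum.of_nat_of_neg_add_one (hP.congr_fun fun n ↦ by congr 2) ?_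
  rw [← hasSum_nat_add_iff' m]
  have hmiddle :
      ∑ i ∈ range m, f (-((i : ℤ) + 1)).natAbs * f (-((i : ℤ) + 1) + m).natAbs =
        ∑ i ∈ range m, f (i + 1) * f (m - 1 - i) :=
    sum_congr rfl fun i hi ↦ by have := mem_range.mp hi; congr 2; omega
  rw [hmiddle, add_sub_cancel_right]
  have htail : HasSum (fun n : ℕ ↦ f (n + 1) * f (n + 1 + m)) (P - f 0 * f m) := by
    simpa using (hasSum_nat_add_iff' 1).mpr hP
  refine htail.congr_fun fun n ↦ ?_
  rw [mul_comm]
  congr 2 <;> omega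

end IntSplit

def geomLinear {K : Type*} [Semiring K] (a α β : K) (n : ℕ) : K := a ^ n * (α + β * n)

theorem hasSum_geomLinear_mul_add {𝕜 : Type*} [NormedField 𝕜] {a : 𝕜} (ha : ‖a‖ < 1)
    (α β : 𝕜) (m : ℕ) :
    HasSum (fun n ↦ geomLinear a α β n * geomLinear a α β (n + m))
      (a ^ m * (α * (α + β * m) / (1 - a ^ 2) + β * (2 * α + β * m) * a ^ 2 / (1 - a ^ 2) ^ 2 +
        β ^ 2 * (a ^ 2 * (1 + a ^ 2) / (1 - a ^ 2) ^ 3))) := by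
  have hq : ‖a ^ 2‖ < 1 := by rw [norm_pow]; nlinarith [norm_nonneg a]
  have h := (((hasSum_geometric_of_norm_lt_one hq).mul_left (α * (α + β * m))).add
    ((hasSum_coe_mul_geometric_of_norm_lt_one hq).mul_left (β * (2 * α + β * m)))).add
    ((hasSum_sq_mul_geometric_of_norm_lt_one hq).mul_left (β ^ 2))
  convert! h.mul_left (a ^ m) using 1
  · ext n
    simp only [geomLinear]
    push_cast
    ring
  · field_simp

theorem sum_range_geomLinear_mul_reflect {K : Type*} [Field K] [CharZero K] (a α β : K)
    (m : ℕ) :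
    ∑ i ∈ range m, geomLinear a α β (i + 1) * geomLinear a α β (m - 1 - i) =
      a ^ m * (m * α * (α + β * m) + β ^ 2 * ((m ^ 3 - m) / 6)) := by
  have hterm (i : ℕ) (hi : i ∈ range m) :
      geomLinear a α β (i + 1) * geomLinear a α β (m - 1 - i) =
        a ^ m * (α * (α + β * m) + β ^ 2 * ((i + 1) * (m - 1 - i))) := by
    obtain ⟨k, rfl⟩ := Nat.exists_eq_add_of_lt (mem_range.mp hi)
    rw [show i + k + 1 - 1 - i = k by omega]
    simp only [geomLinear]
    push_cast
    ring
  rw [sum_congr rfl hterm, ← mul_sum, sum_add_distrib, sum_const, card_range, nsmul_eq_mul,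
    ← mul_sum, sum_range_add_one_mul_sub]
  ring

theorem stmt15_general (a cu σe2 : ℝ) (ha : 0 < a) (ha1 : a < 1) :
    ∀ m : ℕ,
      ∑' τ : ℤ, RuClosed a cu σe2 τ * RuClosed a cu σe2 (τ + (m : ℤ)) =
        cu ^ 4 * σe2 ^ 2 / (1 - a ^ 2) ^ 6 * fGamma a m := by
  intro m
  have hD : 1 - a ^ 2 ≠ 0 := by nlinarith
  have ha' : ‖a‖ < 1 := by rwa [Real.norm_eq_abs, abs_of_pos ha]
  set α := cu ^ 2 * σe2 * (2 / (1 - a ^ 2) ^ 3 - 1 / (1 - a ^ 2) ^ 2)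
  set β := cu ^ 2 * σe2 / (1 - a ^ 2) ^ 2
  have hRu : RuClosed a cu σe2 = fun τ ↦ geomLinear a α β τ.natAbs := by
    funext τ
    simp only [RuClosed, geomLinear, α, β]
    ring
  rw [hRu, (hasSum_int_natAbs_mul_natAbs_add _ m (hasSum_geomLinear_mul_add ha' α β m)).tsum_eq,
    sum_range_geomLinear_mul_reflect]
  simp only [geomLinear, fGamma, α, β]
  field_simp
  ring

/-- For `0 < a < 1`, every integer `m ≥ 0` satisfies
`Σ_{τ=−∞}^{∞} R_u(τ) R_u(τ+m) = (c_u⁴σ_e⁴/(1−a²)⁶) f_Γ(m)`. -/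
theorem stmt15 (a cu σe2 : ℝ) (ha : 0 < a) (ha1 : a < 1) (hσe2 : 0 < σe2) :
    ∀ m : ℕ,
      ∑' τ : ℤ, RuClosed a cu σe2 τ * RuClosed a cu σe2 (τ + (m : ℤ)) =
        cu ^ 4 * σe2 ^ 2 / (1 - a ^ 2) ^ 6 * fGamma a m :=
  stmt15_general a cu σe2 ha ha1
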